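/- Let f : X → X be a homeomorphism of a compact metric space X with the pseudo-orbit tracing property. If the topological entropy of f is zero, then the restriction of f to its nonwandering set Ω(f) is equicontinuous. -/

import Mathlib

open MeasureTheory Filter Set ENNReal

/-- `M_f(n, ε)`: the minimal number of `ε`-balls in the metric
`(x, y) ↦ max_{0 ≤ i ≤ n} d(f^i x, f^i y)` needed to cover `X`. -/
noncomputable def coverNum {X : Type*} [MetricSpace X] (f : X → X) (n : ℕ) (ε : ℝ) : ℕ :=
  sInf {k : ℕ | ∃ S : Finset X, S.card = k ∧
    ∀ x : X, ∃ y ∈ S, ∀ i ≤ n, dist (f^[i] y) (f^[i] x) < ε}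

/-- The topological entropy
`h(f) = lim_{ε → 0} limsup_{n → ∞} (1/n) log M_f(n, ε)`; since the inner
`limsup` is monotone as `ε` decreases, the limit is the supremum over `ε > 0`. -/
noncomputable def topEntropy {X : Type*} [MetricSpace X] (f : X → X) : ℝ≥0∞ :=
  ⨆ (ε : ℝ) (_ : 0 < ε),
    Filter.atTop.limsup fun n : ℕ => ENNReal.ofReal (Real.log (coverNum f n ε) / n)

/-- The nonwandering set of `f`. -/
def nonWanderingSet {X : Type*} [TopologicalSpace X] (f : X → X) : Set X :=
  {x | ∀ U ∈ nhds x, ∃ n : ℕ, 0 < n ∧ (f^[n] '' U ∩ U).Nonempty}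

/-- The `i`-th iterate of a homeomorphism, `i ∈ ℤ`. -/
noncomputable def iterZ {X : Type*} [TopologicalSpace X] (f : X ≃ₜ X) (i : ℤ) (x : X) : X :=
  if 0 ≤ i then (⇑f)^[i.toNat] x else (⇑f.symm)^[(-i).toNat] x

/-- The homeomorphism `f` has the pseudo-orbit tracing property: for all `ε > 0`
there is `δ > 0` such that every `δ`-pseudo-orbit is `ε`-shadowed. -/
def POTP {X : Type*} [MetricSpace X] (f : X ≃ₜ X) : Prop :=
  ∀ ε > (0 : ℝ), ∃ δ > (0 : ℝ), ∀ x : ℤ → X,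
    (∀ i : ℤ, dist (f (x i)) (x (i + 1)) ≤ δ) →
    ∃ y : X, ∀ i : ℤ, dist (iterZ f i y) (x i) ≤ ε

/-- The restriction of `f` to the invariant set `S` is equicontinuous: for every
`ε > 0` there is `δ > 0` such that any two `δ`-close points of `S` stay
`ε`-close under all forward iterates. -/
def EquicontinuousOnSet {X : Type*} [MetricSpace X] (f : X → X) (S : Set X) : Prop :=
  ∀ ε > (0 : ℝ), ∃ δ > (0 : ℝ), ∀ x ∈ S, ∀ y ∈ S, dist x y < δ →
    ∀ i : ℕ, dist (f^[i] x) (f^[i] y) < ε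

/-!
If `f` is not equicontinuous on `Ω(f)`, there are nonwandering points `x`, `y`, as close as we
like, whose orbits are `ε` apart at some time `n`. For a nonwandering point `p` there is a
`δ`-pseudo-orbit from `f p` back to `p`; so the orbit segments `x, …, fⁿ x` and `y, …, fⁿ y`
close up into two `δ`-pseudo-orbit loops based at `x` (as `y` is close to `x`), which after
repetition have a common length `N`. Concatenating the two loops along any binary word gives a
`δ`-pseudo-orbit; shadowing turns the `2 ^ J` words of length `J` into `2 ^ J` points that are
`(N J, ε / 2)`-separated, so `h(f) ≥ log 2 / N > 0`.
-/

section Append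

variable {X : Type*} {L : ℕ} {c d : ℕ → X}

def seqAppend (L : ℕ) (c d : ℕ → X) : ℕ → X := fun j => if j < L then c j else d (j - L)

theorem seqAppend_of_lt {j : ℕ} (hj : j < L) : seqAppend L c d j = c j := if_pos hj

theorem seqAppend_of_le {j : ℕ} (hj : L ≤ j) : seqAppend L c d j = d (j - L) :=
  if_neg hj.not_gt

-- Block `t` occupies the times `N t, …, N t + N - 1`, as `i % N ≥ 0` on `ℤ`.
def concatBlocks (N : ℕ) (b : ℤ → ℕ → X) : ℤ → X := fun i => b (i / N) (i % N).toNat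

theorem concatBlocks_mul_add {N : ℕ} (b : ℤ → ℕ → X) (t : ℤ) {r : ℕ} (hr : r < N) :
    concatBlocks N b (N * t + r) = b t r := by
  obtain ⟨hq, hr'⟩ := (Int.ediv_emod_unique (a := N * t + r) (b := N) (q := t) (r := r)
    (by omega)).2 ⟨add_comm _ _, by omega, by omega⟩
  simp only [concatBlocks, hq, hr', Int.toNat_natCast]

end Append

section PseudoOrbit

variable {X : Type*} [PseudoMetricSpace X] {f : X → X} {δ δ' : ℝ} {L M : ℕ} {c d : ℕ → X}
  {x : X}

def IsPseudoOrbit (f : X → X) (δ : ℝ) (L : ℕ) (c : ℕ → X) : Prop :=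
  ∀ j < L, dist (f (c j)) (c (j + 1)) ≤ δ

structure IsPseudoOrbitLoop (f : X → X) (δ : ℝ) (L : ℕ) (x : X) (c : ℕ → X) : Prop where
  isPseudoOrbit : IsPseudoOrbit f δ L c
  apply_zero : c 0 = x
  apply_length : c L = x

theorem IsPseudoOrbit.mono (h : IsPseudoOrbit f δ L c) (hδ : δ ≤ δ') : IsPseudoOrbit f δ' L c :=
  fun j hj => (h j hj).trans hδ

theorem IsPseudoOrbitLoop.mono (h : IsPseudoOrbitLoop f δ L x c) (hδ : δ ≤ δ') :
    IsPseudoOrbitLoop f δ' L x c :=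
  ⟨h.isPseudoOrbit.mono hδ, h.apply_zero, h.apply_length⟩

theorem isPseudoOrbit_iterate (x : X) (L : ℕ) : IsPseudoOrbit f 0 L (fun j => f^[j] x) :=
  fun j _ => by simp [Function.iterate_succ_apply']

theorem IsPseudoOrbit.update_zero (h : IsPseudoOrbit f δ L c) (a : X) :
    IsPseudoOrbit f (δ + dist (f a) (f (c 0))) L (Function.update c 0 a) := by
  intro j hj
  rcases eq_or_ne j 0 with rfl | hj0
  · rw [Function.update_self, Function.update_of_ne (Nat.succ_ne_zero 0)]
    linarith [dist_triangle (f a) (f (c 0)) (c 1), h 0 hj]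
  · rw [Function.update_of_ne hj0, Function.update_of_ne (Nat.succ_ne_zero j)]
    linarith [h j hj, dist_nonneg (x := f a) (y := f (c 0))]

theorem IsPseudoOrbit.update_length (h : IsPseudoOrbit f δ L c) (b : X) :
    IsPseudoOrbit f (δ + dist (c L) b) L (Function.update c L b) := by
  intro j hj
  rw [Function.update_of_ne hj.ne]
  rcases eq_or_ne (j + 1) L with hjL | hjL
  · have := h j hj
    rw [hjL] at this ⊢
    rw [Function.update_self]
    linarith [dist_triangle (f (c j)) (c L) b]
  · rw [Function.update_of_ne hjL]
    linarith [h j hj, dist_nonneg (x := c L) (y := b)]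

theorem IsPseudoOrbitLoop.rebase {y : X} (h : IsPseudoOrbitLoop f δ L y c) (hL : 0 < L) (x : X) :
    IsPseudoOrbitLoop f (δ + dist (f x) (f y) + dist y x) L x
      (Function.update (Function.update c 0 x) L x) := by
  have hc := (h.isPseudoOrbit.update_zero x).update_length x
  rw [h.apply_zero, Function.update_of_ne hL.ne', h.apply_length] at hc
  exact ⟨hc, by simp [Function.update_of_ne hL.ne], by simp⟩

theorem IsPseudoOrbit.seqAppend (hc : IsPseudoOrbit f δ L c) (hd : IsPseudoOrbit f δ M d)
    (hcd : c L = d 0) : IsPseudoOrbit f δ (L + M) (seqAppend L c d) := by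
  intro j hj
  rcases lt_or_ge j L with hjL | hLj
  · rw [seqAppend_of_lt hjL]
    rcases (Nat.succ_le_of_lt hjL).lt_or_eq with h | h
    · rw [seqAppend_of_lt h]
      exact hc j hjL
    · rw [seqAppend_of_le h.ge, h, Nat.sub_self, ← hcd]
      exact h ▸ hc j hjL
  · rw [seqAppend_of_le hLj, seqAppend_of_le (by omega), show j + 1 - L = j - L + 1 by omega]
    exact hd (j - L) (by omega)

theorem dist_concatBlocks_le {N : ℕ} (hN : 0 < N) {b : ℤ → ℕ → X}
    (hb : ∀ t, IsPseudoOrbitLoop f δ N x (b t)) (i : ℤ) :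
    dist (f (concatBlocks N b i)) (concatBlocks N b (i + 1)) ≤ δ := by
  obtain ⟨t, r, hr, rfl⟩ : ∃ t : ℤ, ∃ r : ℕ, r < N ∧ i = N * t + r :=
    have := Int.emod_nonneg i (b := N) (by omega)
    have := Int.emod_lt_of_pos i (b := N) (by omega)
    have := Int.mul_ediv_add_emod i N
    ⟨i / N, (i % N).toNat, by omega, by omega⟩
  rw [concatBlocks_mul_add b t hr]
  rcases (Nat.succ_le_of_lt hr).lt_or_eq with h | h
  · rw [show (N : ℤ) * t + r + 1 = N * t + (r + 1 : ℕ) by push_cast; ring,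
      concatBlocks_mul_add b t h]
    exact (hb t).isPseudoOrbit r hr
  · rw [show (N : ℤ) * t + r + 1 = N * (t + 1) + (0 : ℕ) by push_cast [← h]; ring,
      concatBlocks_mul_add b _ hN, (hb _).apply_zero, ← (hb t).apply_length, ← h]
    exact (hb t).isPseudoOrbit r hr

theorem IsPseudoOrbitLoop.mod (h : IsPseudoOrbitLoop f δ L x c) (hL : 0 < L) (M : ℕ) :
    IsPseudoOrbitLoop f δ (L * M) x (fun j => c (j % L)) := by
  refine ⟨fun j _ => ?_, by simpa using h.apply_zero, by simpa using h.apply_zero⟩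
  have := dist_concatBlocks_le hL (fun _ => h) j
  rwa [concatBlocks, concatBlocks, show (j : ℤ) + 1 = ((j + 1 : ℕ) : ℤ) by push_cast; rfl,
    ← Int.natCast_mod, ← Int.natCast_mod, Int.toNat_natCast, Int.toNat_natCast] at this

end PseudoOrbit

section NonWandering

theorem apply_mem_nonWanderingSet {X : Type*} [TopologicalSpace X] {f : X → X}
    (hf : Continuous f) {p : X} (hp : p ∈ nonWanderingSet f) : f p ∈ nonWanderingSet f := by
  intro U hU
  obtain ⟨k, hk, _, ⟨v, hv, rfl⟩, hw⟩ := hp (f ⁻¹' U) (hf.continuousAt.preimage_mem_nhds hU)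
  exact ⟨k, hk, f (f^[k] v), ⟨f v, hv, (Function.Commute.iterate_self f k).eq v⟩, hw⟩

theorem iterate_mem_nonWanderingSet {X : Type*} [TopologicalSpace X] {f : X → X}
    (hf : Continuous f) {p : X} (hp : p ∈ nonWanderingSet f) (n : ℕ) :
    f^[n] p ∈ nonWanderingSet f := by
  induction n with
  | zero => exact hp
  | succ n ih => rw [Function.iterate_succ_apply']; exact apply_mem_nonWanderingSet hf ih

variable {X : Type*} [PseudoMetricSpace X] {f : X → X} {p : X} {η : ℝ}

theorem exists_isPseudoOrbitLoop_of_mem_nonWanderingSet (hf : Continuous f)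
    (hp : p ∈ nonWanderingSet f) (hη : 0 < η) : ∃ L, 0 < L ∧ ∃ c, IsPseudoOrbitLoop f η L p c := by
  have hU : Metric.ball p (η / 2) ∩ f ⁻¹' Metric.ball (f p) (η / 2) ∈ nhds p :=
    inter_mem (Metric.ball_mem_nhds p (half_pos hη))
      (hf.continuousAt.preimage_mem_nhds (Metric.ball_mem_nhds _ (half_pos hη)))
  obtain ⟨k, hk, _, ⟨u, ⟨-, hu⟩, rfl⟩, hku, -⟩ := hp _ hU
  refine ⟨k, hk, _, ((isPseudoOrbit_iterate u k).update_zero p).update_length p |>.mono ?_,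
    by simp [Function.update_of_ne hk.ne], by simp⟩
  rw [Function.update_of_ne hk.ne', Function.iterate_zero_apply]
  linarith [Metric.mem_ball.mp hu, Metric.mem_ball.mp hku, dist_comm (f p) (f u)]

theorem exists_isPseudoOrbit_apply_self (hf : Continuous f) (hp : p ∈ nonWanderingSet f)
    (hη : 0 < η) : ∃ L, 0 < L ∧ ∃ c, IsPseudoOrbit f η L c ∧ c 0 = f p ∧ c L = p := by
  obtain ⟨γ, hγ, hfγ⟩ := Metric.continuousAt_iff.mp (hf.continuousAt (x := f p)) (η / 2)
    (half_pos hη)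
  obtain ⟨k, hk, c, hc⟩ := exists_isPseudoOrbitLoop_of_mem_nonWanderingSet hf hp
    (lt_min (half_pos hγ) (half_pos hη))
  -- go twice around the loop, so that it still has positive length without its first point
  have hcc := (hc.mod hk 2).isPseudoOrbit
  have hd : IsPseudoOrbit f (min (γ / 2) (η / 2)) (k * 2 - 1) fun j => c ((j + 1) % k) :=
    fun j hj => hcc (j + 1) (by omega)
  have hstart : dist (f (f p)) (f (c (1 % k))) < η / 2 := by
    have := hcc 0 (by omega)
    simp only [Nat.zero_mod, zero_add, hc.apply_zero] at this
    rw [dist_comm]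
    exact hfγ (by rw [dist_comm]; linarith [min_le_left (γ / 2) (η / 2)])
  refine ⟨k * 2 - 1, by omega, _, (hd.update_zero (f p)).mono ?_, Function.update_self .., ?_⟩
  · linarith [min_le_right (γ / 2) (η / 2)]
  · rw [Function.update_of_ne (by omega), Nat.sub_add_cancel (by omega), Nat.mul_mod_right,
      hc.apply_zero]

theorem exists_isPseudoOrbit_iterate_self (hf : Continuous f) (hp : p ∈ nonWanderingSet f)
    (hη : 0 < η) (n : ℕ) : ∃ L, n ≤ L ∧ ∃ c, IsPseudoOrbit f η L c ∧ c 0 = f^[n] p ∧ c L = p := by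
  induction n with
  | zero => exact ⟨0, le_rfl, fun _ => p, fun j hj => absurd hj j.not_lt_zero, rfl, rfl⟩
  | succ n ih =>
    obtain ⟨L₁, hL₁, c, hc, hc0, hcL⟩ :=
      exists_isPseudoOrbit_apply_self hf (iterate_mem_nonWanderingSet hf hp n) hη
    obtain ⟨L₂, hL₂, d, hd, hd0, hdL⟩ := ih
    refine ⟨L₁ + L₂, by omega, _, hc.seqAppend hd (hcL.trans hd0.symm), ?_, ?_⟩
    · rw [seqAppend_of_lt hL₁, hc0, Function.iterate_succ_apply']
    · rw [seqAppend_of_le (by omega), Nat.add_sub_cancel_left, hdL]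

theorem exists_isPseudoOrbitLoop_iterate (hf : Continuous f) (hp : p ∈ nonWanderingSet f)
    (hη : 0 < η) {n : ℕ} (hn : 0 < n) :
    ∃ N, n < N ∧ ∃ c, IsPseudoOrbitLoop f η N p c ∧ c n = f^[n] p := by
  obtain ⟨L, hnL, d, hd, hd0, hdL⟩ := exists_isPseudoOrbit_iterate_self hf hp hη n
  refine ⟨n + L, by omega, seqAppend n (fun j => f^[j] p) d,
    ⟨((isPseudoOrbit_iterate p n).mono hη.le).seqAppend hd hd0.symm, ?_, ?_⟩, ?_⟩
  · rw [seqAppend_of_lt hn, Function.iterate_zero, id_eq]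
  · rw [seqAppend_of_le (by omega), Nat.add_sub_cancel_left, hdL]
  · rw [seqAppend_of_le le_rfl, Nat.sub_self, hd0]

theorem exists_isPseudoOrbitLoop_pair (hf : Continuous f) {x y : X}
    (hx : x ∈ nonWanderingSet f) (hy : y ∈ nonWanderingSet f) {δ : ℝ} (hδ : 0 < δ)
    (hfxy : dist (f x) (f y) ≤ δ / 4) (hxy : dist x y ≤ δ / 4) {n : ℕ} (hn : 0 < n) :
    ∃ N, n < N ∧ ∃ A B, IsPseudoOrbitLoop f δ N x A ∧ IsPseudoOrbitLoop f δ N x B ∧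
      A n = f^[n] x ∧ B n = f^[n] y := by
  obtain ⟨NA, hnA, A, hA, hAn⟩ := exists_isPseudoOrbitLoop_iterate hf hx hδ hn
  obtain ⟨NB, hnB, B, hB, hBn⟩ := exists_isPseudoOrbitLoop_iterate hf hy (half_pos hδ) hn
  have hB' := (hB.rebase (by omega) x).mono (δ' := δ) (by linarith [dist_comm x y])
  refine ⟨NA * NB, hnA.trans_le (Nat.le_mul_of_pos_right NA (by omega)), _, _, hA.mod (by omega) NB,
    mul_comm NA NB ▸ (hB'.mod (by omega) NA), ?_, ?_⟩
  · rw [Nat.mod_eq_of_lt hnA, hAn]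
  · simp only [Nat.mod_eq_of_lt hnB]
    rw [Function.update_of_ne hnB.ne, Function.update_of_ne hn.ne', hBn]

end NonWandering

section Entropy

variable {X : Type*} [MetricSpace X] {f : X → X}

theorem exists_finset_dynamical_cover [CompactSpace X] (hf : Continuous f) (m : ℕ) {ε : ℝ}
    (hε : 0 < ε) : ∃ S : Finset X, ∀ x : X, ∃ y ∈ S, ∀ i ≤ m, dist (f^[i] y) (f^[i] x) < ε := by
  obtain ⟨S, -, hS⟩ := isCompact_univ.elim_nhds_subcover
    (fun y => {x | ∀ i ≤ m, dist (f^[i] y) (f^[i] x) < ε}) fun y _ =>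
      (eventually_all_finite (finite_le_nat m)).2 fun i _ =>
        (Metric.tendsto_nhds.mp (hf.iterate i).continuousAt ε hε).mono fun x hx => by
          rwa [dist_comm]
  exact ⟨S, fun x => by simpa using hS (mem_univ x)⟩

theorem card_le_coverNum [CompactSpace X] (hf : Continuous f) {ι : Type*} [Fintype ι] {m : ℕ}
    {ε : ℝ} (hε : 0 < ε) (z : ι → X)
    (hz : Pairwise fun a b => ∃ i ≤ m, 2 * ε ≤ dist (f^[i] (z a)) (f^[i] (z b))) :
    Fintype.card ι ≤ coverNum f m ε := by
  obtain ⟨S, hS, hcover⟩ : coverNum f m ε ∈ {k : ℕ | ∃ S : Finset X, S.card = k ∧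
      ∀ x : X, ∃ y ∈ S, ∀ i ≤ m, dist (f^[i] y) (f^[i] x) < ε} :=
    Nat.sInf_mem <| (exists_finset_dynamical_cover hf m hε).elim fun S hS => ⟨S.card, S, rfl, hS⟩
  choose y hyS hy using fun a => hcover (z a)
  have hinj : Function.Injective y := by
    intro a b hab
    by_contra hne
    obtain ⟨i, hi, hsep⟩ := hz hne
    have ha := hy a i hi
    rw [hab] at ha
    linarith [hy b i hi, dist_triangle_left (f^[i] (z a)) (f^[i] (z b)) (f^[i] (y b))]
  rw [← hS, ← Finset.card_univ]
  exact Finset.card_le_card_of_injOn y (fun a _ => hyS a) hinj.injOn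

theorem topEntropy_ne_zero_of_pow_le_coverNum {N : ℕ} {ε : ℝ} (hN : 0 < N) (hε : 0 < ε)
    (h : ∀ J, 2 ^ J ≤ coverNum f (N * J) ε) : topEntropy f ≠ 0 := by
  have hrate (J : ℕ) (hJ : 0 < J) :
      Real.log 2 / N ≤ Real.log (coverNum f (N * J) ε) / (N * J : ℕ) := by
    have hlog : J * Real.log 2 ≤ Real.log (coverNum f (N * J) ε) := by
      rw [← Real.log_pow]
      exact Real.log_le_log (by positivity) (by exact_mod_cast h J)
    calc Real.log 2 / N = J * Real.log 2 / (N * J : ℕ) := by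
          push_cast; field_simp
      _ ≤ _ := by gcongr
  have hfreq : ∃ᶠ m in atTop,
      ENNReal.ofReal (Real.log 2 / N) ≤ ENNReal.ofReal (Real.log (coverNum f m ε) / m) :=
    frequently_atTop.2 fun a => ⟨N * (a + 1), by nlinarith,
      ENNReal.ofReal_le_ofReal (hrate (a + 1) a.succ_pos)⟩
  have hpos : 0 < ENNReal.ofReal (Real.log 2 / N) :=
    ENNReal.ofReal_pos.2 (div_pos (Real.log_pos one_lt_two) (by exact_mod_cast hN))
  refine (hpos.trans_le ((le_limsup_of_frequently_le' hfreq).trans ?_)).ne'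
  exact le_iSup₂ (f := fun ε (_ : 0 < ε) =>
    atTop.limsup fun n : ℕ => ENNReal.ofReal (Real.log (coverNum f n ε) / n)) ε hε

end Entropy

section Shadowing

variable {X : Type*} [MetricSpace X]

theorem iterZ_natCast (f : X ≃ₜ X) (n : ℕ) (x : X) : iterZ f n x = f^[n] x := by
  simp [iterZ]

theorem pow_le_coverNum_of_isPseudoOrbitLoop [CompactSpace X] (f : X ≃ₜ X) {δ ε : ℝ}
    (hε : 0 < ε) (hshadow : ∀ P : ℤ → X, (∀ i, dist (f (P i)) (P (i + 1)) ≤ δ) →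
      ∃ z, ∀ i, dist (iterZ f i z) (P i) ≤ ε)
    {N n : ℕ} (hnN : n < N) {x : X} {A B : ℕ → X} (hA : IsPseudoOrbitLoop f δ N x A)
    (hB : IsPseudoOrbitLoop f δ N x B) (hAB : 4 * ε ≤ dist (A n) (B n)) (J : ℕ) :
    2 ^ J ≤ coverNum f (N * J) ε := by
  let blocks (w : Fin J → Bool) (t : ℤ) : ℕ → X :=
    if h : t.toNat < J then (if w ⟨t.toNat, h⟩ then B else A) else A
  have hblocks (w : Fin J → Bool) (t : ℤ) : IsPseudoOrbitLoop f δ N x (blocks w t) := by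
    unfold blocks; split_ifs <;> assumption
  choose z hz using fun w => hshadow _ (dist_concatBlocks_le (hnN.trans_le' n.zero_le) (hblocks w))
  have hsep : Pairwise fun w w' =>
      ∃ i ≤ N * J, 2 * ε ≤ dist (f^[i] (z w)) (f^[i] (z w')) := by
    intro w w' hne
    obtain ⟨k, hk⟩ := Function.ne_iff.mp hne
    refine ⟨N * k + n, by nlinarith [k.isLt], ?_⟩
    have hw := hz w (N * k + n : ℕ)
    have hw' := hz w' (N * k + n : ℕ)
    rw [iterZ_natCast, Nat.cast_add, Nat.cast_mul, concatBlocks_mul_add _ _ hnN] at hw hw'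
    have hblock : 4 * ε ≤ dist (blocks w k n) (blocks w' k n) := by
      simp only [blocks, Int.toNat_natCast, k.isLt, dite_true, Fin.eta]
      split_ifs with h h' h'
      · exact absurd (h.trans h'.symm) hk
      · exact dist_comm (A n) (B n) ▸ hAB
      · exact hAB
      · simp_all
    linarith [dist_triangle4 (blocks w k n) (f^[N * k + n] (z w)) (f^[N * k + n] (z w'))
      (blocks w' k n), dist_comm (blocks w k n) (f^[N * k + n] (z w))]
  simpa using card_le_coverNum f.continuous hε z hsep

end Shadowing

/-- If a homeomorphism of a compact metric space has the POTP and zero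
topological entropy, then its restriction to the nonwandering set is
equicontinuous. -/
theorem equicontinuousOn_nonWandering_of_potp_of_entropy_zero
    {X : Type*} [MetricSpace X] [CompactSpace X]
    (f : X ≃ₜ X) (hPOTP : POTP f) (hent : topEntropy (⇑f) = 0) :
    EquicontinuousOnSet (⇑f) (nonWanderingSet (⇑f)) := by
  intro ε hε
  by_contra! hbad
  obtain ⟨δ, hδ, hshadow⟩ := hPOTP (ε / 4) (by positivity)
  obtain ⟨γ, hγ, hfγ⟩ := Metric.uniformContinuous_iff.mp
    (CompactSpace.uniformContinuous_of_continuous f.continuous) (δ / 4) (by positivity)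
  obtain ⟨x, hx, y, hy, hxy, n, hn⟩ := hbad (min γ (min (δ / 4) ε)) (by positivity)
  have hn0 : 0 < n := Nat.pos_of_ne_zero fun h => by
    subst h
    simp only [Function.iterate_zero, id_eq] at hn
    linarith [hxy.trans_le ((min_le_right _ _).trans (min_le_right _ _))]
  obtain ⟨N, hnN, A, B, hA, hB, hAn, hBn⟩ := exists_isPseudoOrbitLoop_pair f.continuous hx hy hδ
    (hfγ (hxy.trans_le (min_le_left _ _))).le
    (hxy.le.trans ((min_le_right _ _).trans (min_le_left _ _))) hn0
  refine topEntropy_ne_zero_of_pow_le_coverNum (hn0.trans hnN) (by positivity)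
    (pow_le_coverNum_of_isPseudoOrbitLoop f (by positivity) hshadow hnN hA hB ?_) hent
  rw [hAn, hBn]
  linarith
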